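/- Let G be a group, n a natural number, and P the free product of n copies of G. For all pairwise distinct i j k : Fin n and all g h : G, the composite partial conjugation φ(i,j,g) ∘ φ(i,k,g) commutes with φ(j,k,h): (φ(i,j,g) ∘ φ(i,k,g)) ∘ φ(j,k,h) = φ(j,k,h) ∘ (φ(i,j,g) ∘ φ(i,k,g)) as monoid homomorphisms P →* P. -/

import Mathlib

/-!
Write `c = ι i g`. The composite `φ(i,j,g) ∘ φ(i,k,g)` conjugates the factors `j` and `k` by `c`
and fixes the other factors, while `φ(j,k,h)` fixes `c` and the factor `j` and sends the factor
`k` into the subgroup generated by the factors `j` and `k`, on which the composite is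
conjugation by `c`. Hence both composites agree on every generator.
-/

/-- `φ : P →* P` is the partial conjugation of the free product
`P = Monoid.CoprodI (fun _ : Fin n => G)` associated to `i j : Fin n` and `g : G`:
it sends `ι j x` to `(ι i g) * (ι j x) * (ι i g)⁻¹` and fixes `ι k x` for `k ≠ j`. -/
def IsPartialConj {n : ℕ} {G : Type*} [Group G] (i j : Fin n) (g : G)
    (φ : Monoid.CoprodI (fun _ : Fin n => G) →* Monoid.CoprodI (fun _ : Fin n => G)) : Prop :=
  (∀ x : G, φ (Monoid.CoprodI.of (i := j) x) =
      Monoid.CoprodI.of (i := i) g * Monoid.CoprodI.of (i := j) x *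
        (Monoid.CoprodI.of (i := i) g)⁻¹) ∧
  ∀ k : Fin n, k ≠ j → ∀ x : G,
      φ (Monoid.CoprodI.of (i := k) x) = Monoid.CoprodI.of (i := k) x

open Monoid.CoprodI

namespace IsPartialConj

variable {n : ℕ} {G : Type*} [Group G] {i j : Fin n} {g : G}
  {φ : Monoid.CoprodI (fun _ : Fin n => G) →* Monoid.CoprodI (fun _ : Fin n => G)}

theorem apply_of_self (hφ : IsPartialConj i j g φ) (x : G) :
    φ (of (i := j) x) = of (i := i) g * of (i := j) x * (of (i := i) g)⁻¹ :=
  hφ.1 x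

theorem apply_of_ne (hφ : IsPartialConj i j g φ) {k : Fin n} (hk : k ≠ j) (x : G) :
    φ (of (i := k) x) = of (i := k) x :=
  hφ.2 k hk x

theorem apply_conj_of_ne (hφ : IsPartialConj i j g φ) {l k : Fin n} (hl : l ≠ j) (hk : k ≠ j)
    (a x : G) :
    φ (of (i := l) a * of (i := k) x * (of (i := l) a)⁻¹) =
      of (i := l) a * of (i := k) x * (of (i := l) a)⁻¹ := by
  rw [map_mul, map_mul, map_inv, hφ.apply_of_ne hl, hφ.apply_of_ne hk]

theorem comp_apply_of_right {k : Fin n}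
    {ψ : Monoid.CoprodI (fun _ : Fin n => G) →* Monoid.CoprodI (fun _ : Fin n => G)}
    (hφ : IsPartialConj i j g φ) (hψ : IsPartialConj i k g ψ) (hij : i ≠ j) (hjk : j ≠ k)
    (x : G) :
    φ (ψ (of (i := k) x)) = of (i := i) g * of (i := k) x * (of (i := i) g)⁻¹ := by
  rw [hψ.apply_of_self, hφ.apply_conj_of_ne hij hjk.symm]

theorem comp_apply_of_left {k : Fin n}
    {ψ : Monoid.CoprodI (fun _ : Fin n => G) →* Monoid.CoprodI (fun _ : Fin n => G)}
    (hφ : IsPartialConj i j g φ) (hψ : IsPartialConj i k g ψ) (hjk : j ≠ k) (x : G) :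
    φ (ψ (of (i := j) x)) = of (i := i) g * of (i := j) x * (of (i := i) g)⁻¹ := by
  rw [hψ.apply_of_ne hjk, hφ.apply_of_self]

end IsPartialConj

/-- For pairwise distinct `i j k` the composite partial conjugation
`φ(i,j,g) ∘ φ(i,k,g)` commutes with `φ(j,k,h)`. -/
theorem partialConj_prod_comm {n : ℕ} {G : Type*} [Group G] (i j k : Fin n)
    (hij : i ≠ j) (hik : i ≠ k) (hjk : j ≠ k) (g h : G)
    (φij φik φjk :
      Monoid.CoprodI (fun _ : Fin n => G) →* Monoid.CoprodI (fun _ : Fin n => G))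
    (h₁ : IsPartialConj i j g φij) (h₂ : IsPartialConj i k g φik)
    (h₃ : IsPartialConj j k h φjk) :
    (φij.comp φik).comp φjk = φjk.comp (φij.comp φik) := by
  refine Monoid.CoprodI.ext_hom _ _ fun m => MonoidHom.ext fun x => ?_
  simp only [MonoidHom.comp_apply]
  rcases eq_or_ne m k with rfl | hmk
  · simp only [h₃.apply_of_self, map_mul, map_inv, h₁.comp_apply_of_left h₂ hjk,
      h₁.comp_apply_of_right h₂ hij hjk, h₃.apply_of_ne hik]
    group
  rcases eq_or_ne m j with rfl | hmj
  · rw [h₃.apply_of_ne hmk, h₁.comp_apply_of_left h₂ hmk, h₃.apply_conj_of_ne hik hjk]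
  · simp only [h₃.apply_of_ne hmk, h₂.apply_of_ne hmk, h₁.apply_of_ne hmj]
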